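/- With ν_{ni}⋄(t) = ν_{ni}(t) − 2n⁻¹u_n(t), for all s,t ∈ [0,1], |n Σ_{i=1}^n ν_{ni}⋄(s)ν_{ni}⋄(t) − {Γ(s,t) − 4u_∞(s)u_∞(t)}| ≤ C n⁻¹ for an absolute constant C, where u_∞(t) = t(2−t) and Γ is as in Lemma 1. -/

import Mathlib

open Finset

noncomputable def u (n : ℕ) (t : ℝ) : ℝ :=
  ((⌊(n : ℝ) * t⌋ * (2 * (n : ℤ) - ⌊(n : ℝ) * t⌋ - 1) : ℤ) : ℝ) / ((n : ℝ) ^ 2 - n)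

noncomputable def nu (n i : ℕ) (t : ℝ) : ℝ :=
  2 * ((min ⌊(n : ℝ) * t⌋ ((i : ℤ) - 1) + min ⌊(n : ℝ) * t⌋ ((n : ℤ) - i) : ℤ) : ℝ) /
    ((n : ℝ) ^ 2 - n)

/-- The limiting covariance function `Γ` of Lemma 1, extended symmetrically. -/
noncomputable def Gam (s t : ℝ) : ℝ :=
  if s ≤ t then
    (if s + t ≤ 1 then 4 * s * (4 * t - 2 * t ^ 2 - s * t - s ^ 2 / 3)
     else 4 * (s * (1 - s + 2 * t - t ^ 2) - (1 - t) ^ 3 / 3))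
  else
    (if t + s ≤ 1 then 4 * t * (4 * s - 2 * s ^ 2 - t * s - t ^ 2 / 3)
     else 4 * (t * (1 - t + 2 * s - s ^ 2) - (1 - s) ^ 3 / 3))

/-!
With `k = ⌊n s⌋`, `ν_{ni}(s)` is `2 / (n² - n)` times the tent `min(k, i - 1) + min(k, n - i)`.
The tents sum to `k (2n - k - 1)`, so `∑ᵢ ν_{ni} = 2 u_n` and centring only subtracts
`4 u_n(s) u_n(t)`. Cutting `range n` at `k`, `l` and `n - l` makes every product of two tents
piecewise quadratic, and for `k ≤ l`
`3 ∑ᵢ tent_k tent_l = -k³ - 3k²l - 6kl² + 12kln - 9kl + k + m (m + 1) (m + 2)`,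
`m = (k + l - n)₊`. At `(k, l, n) = (n s, n t, n)` the cubic terms, `m³` included, add up to
`(3/4) n³ Γ(s, t)`; `m³` is where the `(s + t - 1)₊³` of `Γ` comes from. As `k`, `l` are within
`1` of `n s`, `n t`, the rest is `O(n²)`, hence `O(1/n)` after the normalisation
`n / (n² - n)²`; likewise `u_n(s) = s (2 - s) + O(1/n)`.
-/

theorem six_mul_sum_range_quadratic {R : Type*} [CommRing R] (a b c : R) (m : ℕ) :
    6 * ∑ x ∈ range m, (a + b * x + c * x ^ 2) =
      m * (6 * a + 3 * b * (m - 1) + c * (m - 1) * (2 * m - 1)) := by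
  induction m with
  | zero => simp
  | succ m ih => rw [sum_range_succ, mul_add, ih]; push_cast; ring

theorem sum_range_reflect_int {M : Type*} [AddCommMonoid M] (g : ℤ → M) (n : ℕ) :
    ∑ j ∈ range n, g (n - 1 - j) = ∑ j ∈ range n, g j := by
  rw [← sum_range_reflect (fun j : ℕ => g j) n]
  refine sum_congr rfl fun j hj => ?_
  have := mem_range.1 hj
  congr 1
  omega

theorem two_mul_sum_range_min (k n : ℕ) (hkn : k ≤ n) :
    2 * ∑ j ∈ range n, min (k : ℤ) j = k * (2 * n - k - 1) := by
  obtain ⟨q, rfl⟩ := Nat.exists_eq_add_of_le hkn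
  rw [sum_range_add]
  have h₁ : ∑ j ∈ range k, min (k : ℤ) j = ∑ j ∈ range k, (0 + 1 * (j : ℤ) + 0 * j ^ 2) := by
    refine sum_congr rfl fun j hj => ?_
    rw [min_eq_right (by grind)]; ring
  have h₂ : ∑ x ∈ range q, min (k : ℤ) ((k + x : ℕ) : ℤ) =
      ∑ x ∈ range q, ((k : ℤ) + 0 * x + 0 * x ^ 2) := by
    refine sum_congr rfl fun x hx => ?_
    rw [min_eq_left (by omega)]; ring
  rw [h₁, h₂]
  push_cast
  linarith [six_mul_sum_range_quadratic (0 : ℤ) 1 0 k, six_mul_sum_range_quadratic (k : ℤ) 0 0 q]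

theorem six_mul_sum_range_min_mul_min (k l n : ℕ) (hkl : k ≤ l) (hln : l ≤ n) :
    6 * ∑ j ∈ range n, min (k : ℤ) j * min (l : ℤ) j =
      k * (1 - k ^ 2 - 3 * l ^ 2 - 3 * l + 6 * l * n) := by
  obtain ⟨p, rfl⟩ := Nat.exists_eq_add_of_le hkl
  obtain ⟨q, rfl⟩ := Nat.exists_eq_add_of_le hln
  rw [sum_range_add, sum_range_add]
  have h₁ : ∑ j ∈ range k, min (k : ℤ) j * min ((k + p : ℕ) : ℤ) j =
      ∑ j ∈ range k, (0 + 0 * j + 1 * (j : ℤ) ^ 2) := by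
    refine sum_congr rfl fun j hj => ?_
    rw [min_eq_right (by grind), min_eq_right (by grind)]; ring
  have h₂ : ∑ x ∈ range p,
      min (k : ℤ) ((k + x : ℕ) : ℤ) * min ((k + p : ℕ) : ℤ) ((k + x : ℕ) : ℤ) =
      ∑ x ∈ range p, ((k : ℤ) ^ 2 + k * x + 0 * x ^ 2) := by
    refine sum_congr rfl fun x hx => ?_
    rw [min_eq_left (by omega), min_eq_right (by grind)]; push_cast; ring
  have h₃ : ∑ x ∈ range q,
      min (k : ℤ) ((k + p + x : ℕ) : ℤ) * min ((k + p : ℕ) : ℤ) ((k + p + x : ℕ) : ℤ) =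
      ∑ x ∈ range q, ((k : ℤ) * (k + p) + 0 * x + 0 * x ^ 2) := by
    refine sum_congr rfl fun x hx => ?_
    rw [min_eq_left (by omega), min_eq_left (by omega)]; push_cast; ring
  rw [h₁, h₂, h₃]
  push_cast
  linear_combination six_mul_sum_range_quadratic (0 : ℤ) 0 1 k +
    six_mul_sum_range_quadratic ((k : ℤ) ^ 2) k 0 p +
    six_mul_sum_range_quadratic ((k : ℤ) * (k + p)) 0 0 q

theorem six_mul_sum_range_min_mul_min_reflect_of_add_le (k l n : ℕ) (hkln : k + l ≤ n) :
    6 * ∑ j ∈ range n, min (k : ℤ) j * min (l : ℤ) (n - 1 - j) =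
      3 * k * l * (2 * n - k - l - 2) := by
  obtain ⟨r, rfl⟩ : ∃ r, n = k + r + l := ⟨n - k - l, by omega⟩
  rw [sum_range_add, sum_range_add]
  have h₁ : ∑ j ∈ range k, min (k : ℤ) j * min (l : ℤ) (((k + r + l : ℕ) : ℤ) - 1 - j) =
      ∑ j ∈ range k, (0 + l * (j : ℤ) + 0 * j ^ 2) := by
    refine sum_congr rfl fun j hj => ?_
    rw [min_eq_right (by grind), min_eq_left (by grind)]; ring
  have h₂ : ∑ x ∈ range r, min (k : ℤ) ((k + x : ℕ) : ℤ) *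
        min (l : ℤ) (((k + r + l : ℕ) : ℤ) - 1 - ((k + x : ℕ) : ℤ)) =
      ∑ x ∈ range r, ((k : ℤ) * l + 0 * x + 0 * x ^ 2) := by
    refine sum_congr rfl fun x hx => ?_
    rw [min_eq_left (by omega), min_eq_left (by grind)]; ring
  have h₃ : ∑ x ∈ range l, min (k : ℤ) ((k + r + x : ℕ) : ℤ) *
        min (l : ℤ) (((k + r + l : ℕ) : ℤ) - 1 - ((k + r + x : ℕ) : ℤ)) =
      ∑ x ∈ range l, ((k : ℤ) * (l - 1) + (-k) * x + 0 * x ^ 2) := by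
    refine sum_congr rfl fun x hx => ?_
    rw [min_eq_left (by omega), min_eq_right (by grind)]; push_cast; ring
  rw [h₁, h₂, h₃]
  push_cast
  linear_combination six_mul_sum_range_quadratic (0 : ℤ) l 0 k +
    six_mul_sum_range_quadratic ((k : ℤ) * l) 0 0 r +
    six_mul_sum_range_quadratic ((k : ℤ) * (l - 1)) (-k) 0 l

theorem six_mul_sum_range_min_mul_min_reflect_of_le_add (k l n : ℕ) (hk : k ≤ n) (hl : l ≤ n)
    (hnkl : n ≤ k + l) :
    6 * ∑ j ∈ range n, min (k : ℤ) j * min (l : ℤ) (n - 1 - j) =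
      3 * k * l * (2 * n - k - l - 2) +
        ((k : ℤ) + l - n) * ((k : ℤ) + l - n + 1) * ((k : ℤ) + l - n + 2) := by
  obtain ⟨q, p, r, rfl, rfl, rfl⟩ : ∃ q p r, n = q + p + r ∧ k = q + p ∧ l = p + r :=
    ⟨n - l, k + l - n, n - k, by omega, by omega, by omega⟩
  rw [sum_range_add, sum_range_add]
  have h₁ : ∑ j ∈ range q,
      min ((q + p : ℕ) : ℤ) j * min ((p + r : ℕ) : ℤ) (((q + p + r : ℕ) : ℤ) - 1 - j) =
      ∑ j ∈ range q, (0 + (p + r) * (j : ℤ) + 0 * j ^ 2) := by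
    refine sum_congr rfl fun j hj => ?_
    rw [min_eq_right (by grind), min_eq_left (by grind)]; push_cast; ring
  have h₂ : ∑ x ∈ range p, min ((q + p : ℕ) : ℤ) ((q + x : ℕ) : ℤ) *
        min ((p + r : ℕ) : ℤ) (((q + p + r : ℕ) : ℤ) - 1 - ((q + x : ℕ) : ℤ)) =
      ∑ x ∈ range p, ((q : ℤ) * (p + r - 1) + (p + r - 1 - q) * x + (-1) * x ^ 2) := by
    refine sum_congr rfl fun x hx => ?_
    rw [min_eq_right (by grind), min_eq_right (by grind)]; push_cast; ring
  have h₃ : ∑ x ∈ range r, min ((q + p : ℕ) : ℤ) ((q + p + x : ℕ) : ℤ) *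
        min ((p + r : ℕ) : ℤ) (((q + p + r : ℕ) : ℤ) - 1 - ((q + p + x : ℕ) : ℤ)) =
      ∑ x ∈ range r, (((q : ℤ) + p) * (r - 1) + (-(q + p)) * x + 0 * x ^ 2) := by
    refine sum_congr rfl fun x hx => ?_
    rw [min_eq_left (by omega), min_eq_right (by grind)]; push_cast; ring
  rw [h₁, h₂, h₃]
  push_cast
  linear_combination six_mul_sum_range_quadratic (0 : ℤ) (p + r) 0 q +
    six_mul_sum_range_quadratic ((q : ℤ) * (p + r - 1)) (p + r - 1 - q) (-1) p +
    six_mul_sum_range_quadratic (((q : ℤ) + p) * (r - 1)) (-(q + p)) 0 r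

theorem six_mul_sum_range_min_mul_min_reflect (k l n : ℕ) (hk : k ≤ n) (hl : l ≤ n) :
    6 * ∑ j ∈ range n, min (k : ℤ) j * min (l : ℤ) (n - 1 - j) =
      3 * k * l * (2 * n - k - l - 2) + max ((k : ℤ) + l - n) 0 *
        (max ((k : ℤ) + l - n) 0 + 1) * (max ((k : ℤ) + l - n) 0 + 2) := by
  rcases le_total (k + l) n with hkln | hnkl
  · rw [max_eq_right (by omega), six_mul_sum_range_min_mul_min_reflect_of_add_le k l n hkln]
    ring
  · rw [max_eq_left (by omega),
      six_mul_sum_range_min_mul_min_reflect_of_le_add k l n hk hl hnkl]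

def tent (n : ℕ) (k : ℤ) (i : ℕ) : ℤ := min k (i - 1) + min k (n - i)

theorem nu_eq_tent (n i : ℕ) (t : ℝ) :
    nu n i t = 2 * tent n ⌊(n : ℝ) * t⌋ i / ((n : ℝ) ^ 2 - n) :=
  rfl

theorem sum_Icc_one_eq_sum_range {M : Type*} [AddCommMonoid M] (n : ℕ) (f : ℕ → M) :
    ∑ i ∈ Icc 1 n, f i = ∑ j ∈ range n, f (j + 1) := by
  rw [← Ico_add_one_right_eq_Icc, sum_Ico_eq_sum_range, add_tsub_cancel_right]
  simp only [add_comm]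

theorem tent_add_one (n : ℕ) (k : ℤ) (j : ℕ) :
    tent n k (j + 1) = min k j + min k (n - 1 - j) := by
  simp only [tent]
  push_cast
  ring_nf

theorem sum_tent (k n : ℕ) (hkn : k ≤ n) :
    ∑ i ∈ Icc 1 n, tent n k i = k * (2 * n - k - 1) := by
  rw [sum_Icc_one_eq_sum_range]
  simp only [tent_add_one, sum_add_distrib]
  rw [sum_range_reflect_int (min (k : ℤ)), ← two_mul, two_mul_sum_range_min k n hkn]

theorem three_mul_sum_tent_mul_tent (k l n : ℕ) (hkl : k ≤ l) (hln : l ≤ n) :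
    3 * ∑ i ∈ Icc 1 n, tent n k i * tent n l i =
      -k ^ 3 - 3 * k ^ 2 * l - 6 * k * l ^ 2 + 12 * k * l * n - 9 * k * l + k +
        max ((k : ℤ) + l - n) 0 * (max ((k : ℤ) + l - n) 0 + 1) *
          (max ((k : ℤ) + l - n) 0 + 2) := by
  have r₁ := sum_range_reflect_int (fun y => min (k : ℤ) (n - 1 - y) * min (l : ℤ) y) n
  have r₂ := sum_range_reflect_int (fun y => min (k : ℤ) y * min (l : ℤ) y) n
  simp only [sub_sub_cancel] at r₁
  rw [sum_Icc_one_eq_sum_range]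
  simp only [tent_add_one, add_mul, mul_add, sum_add_distrib]
  linear_combination six_mul_sum_range_min_mul_min k l n hkl hln +
    six_mul_sum_range_min_mul_min_reflect k l n (hkl.trans hln) hln - 3 * r₁ + 3 * r₂

theorem exists_floor_eq_natCast (n : ℕ) {r : ℝ} (hr : r ∈ Set.Icc (0 : ℝ) 1) :
    ∃ k : ℕ, ⌊(n : ℝ) * r⌋ = k ∧ k ≤ n ∧ (k : ℝ) ≤ n * r ∧ (n : ℝ) * r ≤ k + 1 := by
  have hnr : 0 ≤ (n : ℝ) * r := mul_nonneg n.cast_nonneg hr.1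
  refine ⟨⌊(n : ℝ) * r⌋₊, (Int.natCast_floor_eq_floor hnr).symm, ?_, Nat.floor_le hnr,
    (Nat.lt_floor_add_one _).le⟩
  exact Nat.floor_le_of_le (mul_le_of_le_one_right n.cast_nonneg hr.2)

theorem u_eq {n k : ℕ} {r : ℝ} (hk : ⌊(n : ℝ) * r⌋ = k) :
    u n r = k * (2 * n - k - 1) / ((n : ℝ) ^ 2 - n) := by
  rw [u, hk]
  push_cast
  ring

theorem sum_nu (n : ℕ) {r : ℝ} (hr : r ∈ Set.Icc (0 : ℝ) 1) :
    ∑ i ∈ Icc 1 n, nu n i r = 2 * u n r := by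
  obtain ⟨k, hk, hkn, -⟩ := exists_floor_eq_natCast n hr
  simp only [nu_eq_tent, hk, ← sum_div, ← mul_sum, ← Int.cast_sum, sum_tent k n hkn, u_eq hk]
  push_cast
  ring

theorem sum_sub_mul_sub_eq {ι R : Type*} [CommRing R] (S : Finset ι) (a b : ι → R) (c d : R)
    (ha : ∑ i ∈ S, a i = #S * c) (hb : ∑ i ∈ S, b i = #S * d) :
    ∑ i ∈ S, (a i - c) * (b i - d) = ∑ i ∈ S, a i * b i - #S * c * d := by
  simp only [sub_mul, mul_sub, sum_sub_distrib, ← sum_mul, ← mul_sum, sum_const, nsmul_eq_mul,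
    ha, hb]
  ring

theorem abs_mul_sub_mul_le {a b c d ε : ℝ} (hac : |a - c| ≤ ε) (hbd : |b - d| ≤ ε)
    (hc : |c| ≤ 1) (hd : |d| ≤ 1) : |a * b - c * d| ≤ ε * (2 + ε) := by
  have hε : 0 ≤ ε := (abs_nonneg _).trans hac
  calc |a * b - c * d| = |(a - c) * (b - d) + (a - c) * d + c * (b - d)| := by ring_nf
    _ ≤ |a - c| * |b - d| + |a - c| * |d| + |c| * |b - d| := by
        rw [← abs_mul, ← abs_mul, ← abs_mul]; exact abs_add_three _ _ _
    _ ≤ ε * ε + ε * 1 + 1 * ε := by gcongr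
    _ = ε * (2 + ε) := by ring

theorem mul_nonneg_and_le_sq {a b x : ℝ} (ha : 0 ≤ a) (hb : 0 ≤ b) (hax : a ≤ x) (hbx : b ≤ x) :
    0 ≤ a * b ∧ a * b ≤ x ^ 2 :=
  ⟨mul_nonneg ha hb, by nlinarith [mul_le_mul hax hbx hb (ha.trans hax)]⟩

theorem abs_mul_two_sub_le_one {r : ℝ} (hr : r ∈ Set.Icc (0 : ℝ) 1) : |r * (2 - r)| ≤ 1 := by
  rw [abs_le]; constructor <;> nlinarith [hr.1, hr.2]

theorem abs_u_sub_le {n : ℕ} (hn : 2 ≤ n) {r : ℝ} (hr : r ∈ Set.Icc (0 : ℝ) 1) :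
    |u n r - r * (2 - r)| ≤ 5 / n := by
  obtain ⟨k, hk, -, hkr, hrk⟩ := exists_floor_eq_natCast n hr
  have hx : (2 : ℝ) ≤ n := by exact_mod_cast hn
  have hD : 0 < (n : ℝ) ^ 2 - n := by nlinarith
  set a := (n : ℝ) * r - k
  have hsplit :
      u n r - r * (2 - r) = (n * ((1 - r) * (r - 2 * a)) + a * (1 - a)) / (n ^ 2 - n) := by
    rw [u_eq hk, eq_div_iff hD.ne', sub_mul, div_mul_cancel₀ _ hD.ne']
    simp only [a]; ring
  have h₁ : |(1 - r) * (r - 2 * a)| ≤ 2 := by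
    rw [abs_mul, abs_of_nonneg (by linarith [hr.2] : 0 ≤ 1 - r)]
    have : |r - 2 * a| ≤ 2 := by rw [abs_le]; constructor <;> linarith [hr.1, hr.2]
    nlinarith [abs_nonneg (r - 2 * a), hr.1]
  have h₂ : |a * (1 - a)| ≤ 1 := by rw [abs_le]; constructor <;> nlinarith
  rw [hsplit, abs_div, abs_of_pos hD, div_le_div_iff₀ hD (by linarith)]
  calc |n * ((1 - r) * (r - 2 * a)) + a * (1 - a)| * n ≤ (n * 2 + 1) * n := by
        gcongr
        calc _ ≤ |n * ((1 - r) * (r - 2 * a))| + |a * (1 - a)| := abs_add_le _ _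
          _ ≤ n * 2 + 1 := by rw [abs_mul, Nat.abs_cast]; gcongr
    _ ≤ 5 * ((n : ℝ) ^ 2 - n) := by nlinarith

theorem abs_u_mul_u_sub_le {n : ℕ} (hn : 2 ≤ n) {s t : ℝ} (hs : s ∈ Set.Icc (0 : ℝ) 1)
    (ht : t ∈ Set.Icc (0 : ℝ) 1) :
    |u n s * u n t - s * (2 - s) * (t * (2 - t))| ≤ 45 / 2 * (n : ℝ)⁻¹ := by
  have hx : (2 : ℝ) ≤ n := by exact_mod_cast hn
  have hε : 5 / (n : ℝ) ≤ 5 / 2 := div_le_div_of_nonneg_left (by norm_num) (by norm_num) hx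
  calc _ ≤ 5 / (n : ℝ) * (2 + 5 / n) := abs_mul_sub_mul_le (abs_u_sub_le hn hs)
        (abs_u_sub_le hn ht) (abs_mul_two_sub_le_one hs) (abs_mul_two_sub_le_one ht)
    _ ≤ 5 / (n : ℝ) * (9 / 2) := by gcongr; linarith
    _ = 45 / 2 * (n : ℝ)⁻¹ := by ring

def gamPoly (K L x : ℝ) : ℝ := -K ^ 3 - 3 * K ^ 2 * L - 6 * K * L ^ 2 + 12 * K * L * x

def gamLimit (s t : ℝ) : ℝ := gamPoly s t 1 + max (s + t - 1) 0 ^ 3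

def gamDiscrete (K L x : ℝ) : ℝ :=
  gamPoly K L x + K - 9 * K * L +
    max (K + L - x) 0 * (max (K + L - x) 0 + 1) * (max (K + L - x) 0 + 2)

theorem Gam_eq_of_le {s t : ℝ} (hst : s ≤ t) : Gam s t = 4 / 3 * gamLimit s t := by
  rcases le_or_gt (s + t) 1 with h | h
  · rw [Gam, if_pos hst, if_pos h, gamLimit, gamPoly, max_eq_right (by linarith)]; ring
  · rw [Gam, if_pos hst, if_neg h.not_ge, gamLimit, gamPoly, max_eq_left (by linarith)]; ring

theorem Gam_comm (s t : ℝ) : Gam s t = Gam t s := by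
  unfold Gam
  rcases lt_trichotomy s t with h | rfl | h
  · rw [if_pos h.le, if_neg (not_le.2 h)]
  · rfl
  · rw [if_neg (not_le.2 h), if_pos h.le]

theorem gamPoly_mul_mul (x s t : ℝ) : gamPoly (x * s) (x * t) x = x ^ 3 * gamPoly s t 1 := by
  simp only [gamPoly]; ring

theorem abs_gamPoly_sub_le {K L K' L' x : ℝ} (hK : 0 ≤ K) (hKK' : K ≤ K') (hK' : K' ≤ K + 1)
    (hK'x : K' ≤ x) (hL : 0 ≤ L) (hLL' : L ≤ L') (hL' : L' ≤ L + 1) (hL'x : L' ≤ x) :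
    |gamPoly K' L' x - gamPoly K L x| ≤ 54 * x ^ 2 := by
  have hK'0 : 0 ≤ K' := hK.trans hKK'
  have hL'0 : 0 ≤ L' := hL.trans hLL'
  have hKx : K ≤ x := hKK'.trans hK'x
  have hLx : L ≤ x := hLL'.trans hL'x
  have hx : 0 ≤ x := hK'0.trans hK'x
  obtain ⟨h₁, h₁'⟩ := mul_nonneg_and_le_sq hK'0 hK'0 hK'x hK'x
  obtain ⟨h₂, h₂'⟩ := mul_nonneg_and_le_sq hK'0 hK hK'x hKx
  obtain ⟨h₃, h₃'⟩ := mul_nonneg_and_le_sq hK hK hKx hKx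
  obtain ⟨h₄, h₄'⟩ := mul_nonneg_and_le_sq hK'0 hL'0 hK'x hL'x
  obtain ⟨h₅, h₅'⟩ := mul_nonneg_and_le_sq hK hL'0 hKx hL'x
  obtain ⟨h₆, h₆'⟩ := mul_nonneg_and_le_sq hL'0 hL'0 hL'x hL'x
  obtain ⟨h₇, h₇'⟩ := mul_nonneg_and_le_sq hx hL'0 le_rfl hL'x
  obtain ⟨h₈, h₈'⟩ := mul_nonneg_and_le_sq hK hL hKx hLx
  obtain ⟨h₉, h₉'⟩ := mul_nonneg_and_le_sq hx hK le_rfl hKx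
  set P := -(K' ^ 2 + K' * K + K ^ 2) - 3 * (K' + K) * L' - 6 * L' ^ 2 + 12 * x * L'
  set Q := -3 * K ^ 2 - 6 * K * (L' + L) + 12 * x * K
  have hPQ : gamPoly K' L' x - gamPoly K L x = (K' - K) * P + (L' - L) * Q := by
    simp only [gamPoly, P, Q]; ring
  have hP : |P| ≤ 27 * x ^ 2 := by rw [abs_le]; constructor <;> linarith
  have hQ : |Q| ≤ 27 * x ^ 2 := by rw [abs_le]; constructor <;> linarith
  have hKK : |K' - K| ≤ 1 := by rw [abs_le]; constructor <;> linarith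
  have hLL : |L' - L| ≤ 1 := by rw [abs_le]; constructor <;> linarith
  calc |gamPoly K' L' x - gamPoly K L x| ≤ |K' - K| * |P| + |L' - L| * |Q| := by
        rw [hPQ, ← abs_mul, ← abs_mul]; exact abs_add_le _ _
    _ ≤ 1 * (27 * x ^ 2) + 1 * (27 * x ^ 2) := by gcongr
    _ = 54 * x ^ 2 := by ring

theorem abs_rising_sub_cube_le {M w x : ℝ} (hM : 0 ≤ M) (hMw : M ≤ w) (hw : w ≤ M + 2)
    (hMx : M ≤ x) (hx : 1 ≤ x) : |M * (M + 1) * (M + 2) - w ^ 3| ≤ 26 * x ^ 2 := by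
  have hw0 : 0 ≤ w := hM.trans hMw
  rw [abs_le]
  constructor
  · nlinarith [pow_le_pow_left₀ hw0 hw 3, mul_le_mul hMx hMx hM (hM.trans hMx)]
  · nlinarith [pow_le_pow_left₀ hM hMw 3, mul_le_mul hMx hMx hM (hM.trans hMx)]

theorem abs_gamLimit_le {s t : ℝ} (hs0 : 0 ≤ s) (hs1 : s ≤ 1) (ht0 : 0 ≤ t) (ht1 : t ≤ 1) :
    |gamLimit s t| ≤ 23 := by
  have h₁ : s * t ≤ 1 := mul_le_one₀ hs1 ht0 ht1
  have h₂ : s ^ 2 * t ≤ 1 := mul_le_one₀ (pow_le_one₀ hs0 hs1) ht0 ht1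
  have h₃ : s * t ^ 2 ≤ 1 := mul_le_one₀ hs1 (by positivity) (pow_le_one₀ ht0 ht1)
  have h₄ : s ^ 3 ≤ 1 := pow_le_one₀ hs0 hs1
  have hw0 : 0 ≤ max (s + t - 1) 0 := le_max_right _ _
  have hw : max (s + t - 1) 0 ^ 3 ≤ 1 := pow_le_one₀ hw0 (max_le (by linarith) zero_le_one)
  simp only [gamLimit, gamPoly]
  rw [abs_le]
  constructor <;> nlinarith [mul_nonneg hs0 ht0, pow_nonneg hw0 3]

theorem abs_gamDiscrete_sub_gamLimit_mul_le {x s t K L : ℝ} (hx : 2 ≤ x) (hs : s ≤ 1)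
    (ht : t ≤ 1) (hK : 0 ≤ K) (hKs : K ≤ x * s) (hsK : x * s ≤ K + 1) (hL : 0 ≤ L)
    (hLt : L ≤ x * t) (htL : x * t ≤ L + 1) :
    |gamDiscrete K L x - gamLimit s t * (x * (x - 1) ^ 2)| ≤ 136 * x ^ 2 := by
  have hs0 : 0 ≤ s := by nlinarith
  have ht0 : 0 ≤ t := by nlinarith
  have hxs : x * s ≤ x := by nlinarith
  have hxt : x * t ≤ x := by nlinarith
  have hscale : x ^ 3 * gamLimit s t =
      gamPoly (x * s) (x * t) x + max (x * s + x * t - x) 0 ^ 3 := by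
    rw [show x * s + x * t - x = x * (s + t - 1) by ring, ← mul_zero x,
      ← mul_max_of_nonneg _ _ (by linarith), gamLimit, gamPoly_mul_mul]
    ring
  set M := max (K + L - x) 0
  set W := max (x * s + x * t - x) 0
  have h₁ := abs_gamPoly_sub_le hK hKs hsK hxs hL hLt htL hxt
  have h₂ : |K - 9 * K * L| ≤ 10 * x ^ 2 := by
    obtain ⟨h, h'⟩ := mul_nonneg_and_le_sq (x := x) hK hL (by linarith) (by linarith)
    rw [abs_le]; constructor <;> nlinarith
  have h₃ : |M * (M + 1) * (M + 2) - W ^ 3| ≤ 26 * x ^ 2 :=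
    abs_rising_sub_cube_le (le_max_right _ _) (max_le_max (by linarith) le_rfl)
      (max_le (by linarith [le_max_left (K + L - x) 0]) (by linarith [le_max_right (K + L - x) 0]))
      (max_le (by linarith) (by linarith)) (by linarith)
  have h₄ : |gamLimit s t * (2 * x ^ 2 - x)| ≤ 46 * x ^ 2 := by
    have hpos : 0 ≤ 2 * x ^ 2 - x := by nlinarith
    calc |gamLimit s t * (2 * x ^ 2 - x)| = |gamLimit s t| * (2 * x ^ 2 - x) := by
          rw [abs_mul, abs_of_nonneg hpos]
      _ ≤ 23 * (2 * x ^ 2 - x) := by gcongr; exact abs_gamLimit_le hs0 hs ht0 ht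
      _ ≤ 46 * x ^ 2 := by linarith
  rw [abs_le] at h₁ h₂ h₃ h₄ ⊢
  simp only [gamDiscrete]
  constructor <;> nlinarith

theorem abs_div_gamDiscrete_sub_gamLimit_le {x s t K L : ℝ} (hx : 2 ≤ x) (hs : s ≤ 1)
    (ht : t ≤ 1) (hK : 0 ≤ K) (hKs : K ≤ x * s) (hsK : x * s ≤ K + 1) (hL : 0 ≤ L)
    (hLt : L ≤ x * t) (htL : x * t ≤ L + 1) :
    |x * gamDiscrete K L x / (x ^ 2 - x) ^ 2 - gamLimit s t| ≤ 600 / x := by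
  have hx0 : 0 < x := by linarith
  have hx1 : 0 < x - 1 := by linarith
  have hD : 0 < x * (x - 1) ^ 2 := by positivity
  have hsplit : x * gamDiscrete K L x / (x ^ 2 - x) ^ 2 - gamLimit s t =
      (gamDiscrete K L x - gamLimit s t * (x * (x - 1) ^ 2)) / (x * (x - 1) ^ 2) := by
    rw [show x ^ 2 - x = x * (x - 1) by ring]
    field_simp
  rw [hsplit, abs_div, abs_of_pos hD, div_le_div_iff₀ hD hx0]
  nlinarith [abs_gamDiscrete_sub_gamLimit_mul_le hx hs ht hK hKs hsK hL hLt htL]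

theorem natCast_mul_sum_nu_mul_nu {n k l : ℕ} {s t : ℝ} (hk : ⌊(n : ℝ) * s⌋ = k)
    (hl : ⌊(n : ℝ) * t⌋ = l) (hkl : k ≤ l) (hln : l ≤ n) :
    (n : ℝ) * ∑ i ∈ Icc 1 n, nu n i s * nu n i t =
      4 / 3 * (n * gamDiscrete k l n / ((n : ℝ) ^ 2 - n) ^ 2) := by
  have hT := congrArg (Int.cast : ℤ → ℝ) (three_mul_sum_tent_mul_tent k l n hkl hln)
  push_cast at hT
  simp only [nu_eq_tent, hk, hl, gamDiscrete, gamPoly]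
  generalize (n : ℝ) ^ 2 - n = D
  have hterm : ∀ a b : ℝ, 2 * a / D * (2 * b / D) = 4 * (a * b) / D ^ 2 := fun a b => by ring
  simp only [hterm, ← sum_div, ← mul_sum]
  linear_combination (4 / 3 * n / D ^ 2) * hT

theorem abs_natCast_mul_sum_nu_mul_nu_sub_Gam_le {n : ℕ} (hn : 2 ≤ n) {s t : ℝ}
    (hs : s ∈ Set.Icc (0 : ℝ) 1) (ht : t ∈ Set.Icc (0 : ℝ) 1) (hst : s ≤ t) :
    |(n : ℝ) * ∑ i ∈ Icc 1 n, nu n i s * nu n i t - Gam s t| ≤ 800 * (n : ℝ)⁻¹ := by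
  obtain ⟨k, hk, hkn, hks, hsk⟩ := exists_floor_eq_natCast n hs
  obtain ⟨l, hl, hln, hlt, htl⟩ := exists_floor_eq_natCast n ht
  have hkl : k ≤ l := by
    have := Int.floor_mono (mul_le_mul_of_nonneg_left hst n.cast_nonneg)
    rw [hk, hl] at this
    exact_mod_cast this
  have hx : (2 : ℝ) ≤ n := by exact_mod_cast hn
  rw [natCast_mul_sum_nu_mul_nu hk hl hkl hln, Gam_eq_of_le hst, ← mul_sub, abs_mul,
    abs_of_pos (by norm_num : (0 : ℝ) < 4 / 3)]
  calc _ ≤ 4 / 3 * (600 / (n : ℝ)) := by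
        gcongr
        exact abs_div_gamDiscrete_sub_gamLimit_le hx hs.2 ht.2 k.cast_nonneg hks hsk
          l.cast_nonneg hlt htl
    _ = 800 * (n : ℝ)⁻¹ := by ring

noncomputable def centeredCov (n : ℕ) (s t : ℝ) : ℝ :=
  n * ∑ i ∈ Icc 1 n, (nu n i s - 2 * (n : ℝ)⁻¹ * u n s) * (nu n i t - 2 * (n : ℝ)⁻¹ * u n t)

noncomputable def limitCov (s t : ℝ) : ℝ := Gam s t - 4 * (s * (2 - s)) * (t * (2 - t))

theorem centeredCov_comm (n : ℕ) (s t : ℝ) : centeredCov n s t = centeredCov n t s := by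
  simp only [centeredCov, mul_comm (nu n _ s - _)]

theorem limitCov_comm (s t : ℝ) : limitCov s t = limitCov t s := by
  rw [limitCov, limitCov, Gam_comm]
  ring

theorem centeredCov_eq {n : ℕ} (hn : n ≠ 0) {s t : ℝ} (hs : s ∈ Set.Icc (0 : ℝ) 1)
    (ht : t ∈ Set.Icc (0 : ℝ) 1) :
    centeredCov n s t = n * ∑ i ∈ Icc 1 n, nu n i s * nu n i t - 4 * u n s * u n t := by
  have hn' : (n : ℝ) ≠ 0 := Nat.cast_ne_zero.2 hn
  have hcard : (#(Icc 1 n) : ℝ) = n := by rw [Nat.card_Icc, add_tsub_cancel_right]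
  rw [centeredCov, sum_sub_mul_sub_eq, hcard]
  · field_simp
    ring
  · rw [sum_nu n hs, hcard]; field_simp
  · rw [sum_nu n ht, hcard]; field_simp

theorem abs_centeredCov_sub_limitCov_le {n : ℕ} (hn : 2 ≤ n) {s t : ℝ}
    (hs : s ∈ Set.Icc (0 : ℝ) 1) (ht : t ∈ Set.Icc (0 : ℝ) 1) (hst : s ≤ t) :
    |centeredCov n s t - limitCov s t| ≤ 1000 * (n : ℝ)⁻¹ := by
  have hinv : 0 ≤ (n : ℝ)⁻¹ := by positivity
  have hΓ := abs_natCast_mul_sum_nu_mul_nu_sub_Gam_le hn hs ht hst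
  have huu := abs_u_mul_u_sub_le hn hs ht
  rw [centeredCov_eq (by omega) hs ht, limitCov]
  calc _ = |((n : ℝ) * ∑ i ∈ Icc 1 n, nu n i s * nu n i t - Gam s t) -
        4 * (u n s * u n t - s * (2 - s) * (t * (2 - t)))| := by congr 1; ring
    _ ≤ 800 * (n : ℝ)⁻¹ + 4 * (45 / 2 * (n : ℝ)⁻¹) := by
        refine (abs_sub _ _).trans ?_
        rw [abs_mul, abs_of_pos (by norm_num : (0 : ℝ) < 4)]
        gcongr
    _ ≤ 1000 * (n : ℝ)⁻¹ := by linarith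

theorem centered_covariance_approximation :
    ∃ C : ℝ, 0 < C ∧ ∀ n : ℕ, 2 ≤ n → ∀ s ∈ Set.Icc (0:ℝ) 1, ∀ t ∈ Set.Icc (0:ℝ) 1,
      |(n : ℝ) * (∑ i ∈ Finset.Icc 1 n,
            (nu n i s - 2 * (n : ℝ)⁻¹ * u n s) * (nu n i t - 2 * (n : ℝ)⁻¹ * u n t)) -
          (Gam s t - 4 * (s * (2 - s)) * (t * (2 - t)))| ≤ C * (n : ℝ)⁻¹ := by
  refine ⟨1000, by norm_num, fun n hn s hs t ht => ?_⟩
  rcases le_total s t with hst | hts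
  · exact abs_centeredCov_sub_limitCov_le hn hs ht hst
  · have h := abs_centeredCov_sub_limitCov_le hn ht hs hts
    rwa [centeredCov_comm, limitCov_comm] at h
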